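/- Let G be a graph with a linear order on its vertices. Say v dominates w (for distinct v, w) if N(v)\{w} strictly contains N(w)\{v}, or N(v)\{w} = N(w)\{v} and v > w. Then for a connected graph G there exists an elimination tree of G of depth equal to the treedepth of G in which no vertex dominates any of its ancestors. -/

import Mathlib

open scoped Classical

/-- `nbhd G S` is the set `N(S)` of vertices outside `S` adjacent to some vertex of `S`. -/
def nbhd {V : Type*} (G : SimpleGraph V) (S : Set V) : Set V :=
  {u | u ∉ S ∧ ∃ s ∈ S, G.Adj u s}

/-- `compOf G A c` is the vertex set of the connected component of `c` in `G[A]`. -/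
def compOf {V : Type*} (G : SimpleGraph V) (A : Set V) (c : V) : Set V :=
  {x | ∃ (hx : x ∈ A) (hc : c ∈ A), (G.induce A).Reachable ⟨x, hx⟩ ⟨c, hc⟩}

/-- `IsElimTree G S r anc` : `anc` is the (reflexive) ancestor relation of an
elimination tree of `G[S]` with root `r`, following the recursive definition:
a one-vertex graph is its own elimination tree; otherwise the root `r` is made
the parent of the roots of elimination trees of the components of `G[S] - r`. -/
inductive IsElimTree {V : Type*} (G : SimpleGraph V) : Set V → V → (V → V → Prop) → Prop where
  | single (v : V) : IsElimTree G {v} v (fun a b => a = v ∧ b = v)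
  | node (S : Set V) (r : V) (hr : r ∈ S) (hS : S ≠ {r})
      (root : V → V) (sub : V → V → V → Prop)
      (hsub : ∀ c ∈ S \ {r}, IsElimTree G (compOf G (S \ {r}) c) (root c) (sub c))
      (hcong : ∀ c ∈ S \ {r}, ∀ c' ∈ S \ {r},
        compOf G (S \ {r}) c = compOf G (S \ {r}) c' → root c = root c' ∧ sub c = sub c')
      (anc : V → V → Prop)
      (hanc : ∀ a b, anc a b ↔ (a = r ∧ b ∈ S) ∨ ∃ c ∈ S \ {r}, sub c a b) :
      IsElimTree G S r anc

/-- The depth (maximum number of vertices on a root-to-leaf path) of a rooted forest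
on vertex set `S`, given by its reflexive ancestor relation `anc`. -/
noncomputable def ancDepth {V : Type*} (anc : V → V → Prop) (S : Set V) : ℕ :=
  sSup ((fun b => Set.ncard {a | anc a b}) '' S)

/-- A treedepth decomposition of `G`: a rooted forest on the vertex set of `G`
(given by its reflexive ancestor partial order, in which the set of ancestors of any
vertex is a chain) such that every edge of `G` joins an ancestor-descendant pair. -/
structure TDDecomp {V : Type*} (G : SimpleGraph V) where
  anc : V → V → Prop
  refl : ∀ v, anc v v
  trans : ∀ a b c, anc a b → anc b c → anc a c
  antisymm : ∀ a b, anc a b → anc b a → a = b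
  chain : ∀ a b v, anc a v → anc b v → anc a b ∨ anc b a
  covers : ∀ u v, G.Adj u v → anc u v ∨ anc v u

/-- Depth of a treedepth decomposition. -/
noncomputable def TDDecomp.depth {V : Type*} {G : SimpleGraph V} (F : TDDecomp G) : ℕ :=
  ancDepth F.anc Set.univ

/-- Treedepth of `G`: minimum depth of a treedepth decomposition of `G`. -/
noncomputable def treedepth {V : Type*} (G : SimpleGraph V) : ℕ :=
  sInf {d | ∃ F : TDDecomp G, F.depth = d}

/-- `v` dominates `w`. -/
def Dominates {V : Type*} [LinearOrder V] (G : SimpleGraph V) (v w : V) : Prop :=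
  v ≠ w ∧ ((G.neighborSet w \ {v}) ⊂ (G.neighborSet v \ {w}) ∨
    (G.neighborSet v \ {w} = G.neighborSet w \ {v} ∧ w < v))

/-- The score of an elimination tree (given by its ancestor relation `anc`):
the lexicographically least pair `(depth of u, u)` over vertices `u` dominated by
one of their descendants, and `⊤ = (∞,∞)` if no such vertex exists. -/
noncomputable def score {V : Type*} [Fintype V] [LinearOrder V] (G : SimpleGraph V)
    (anc : V → V → Prop) : WithTop (Lex (ℕ × V)) :=
  Finset.min ((Finset.univ.filter
      (fun u => ∃ w, anc u w ∧ Dominates G w u)).image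
    (fun u => toLex (Set.ncard {a | anc a u}, u)))

/-!
Induct on `|S|` for connected `G[S]`: take as root of `S` a vertex `r` that is the root of some
optimal treedepth decomposition of `G[S]`, and recurse into the components of `G[S] - r`. Every
such component has treedepth less than that of `G[S]`, so the elimination tree obtained is
optimal. If `w` dominates `r`, then `N(r) \ {w} ⊆ N(w) \ {r}`, so swapping `r` and `w` in an
optimal decomposition rooted at `r` yields one rooted at `w`. Domination strictly increases the
pair (degree, vertex) lexicographically, so choosing `r` to maximise this pair among optimal roots
leaves `r` undominated.
-/

open SimpleGraph

lemma SimpleGraph.Reachable.imp_of_adj {W : Type*} {H : SimpleGraph W} {p : W → Prop}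
    (hp : ∀ x y, H.Adj x y → p x → p y) {x y : W} (h : H.Reachable x y) : p x → p y := by
  rw [reachable_iff_reflTransGen] at h
  induction h with
  | refl => exact id
  | tail _ hadj ih => exact fun hx => hp _ _ hadj (ih hx)

section CompOf
variable {V : Type*} {G : SimpleGraph V} {A : Set V} {c x y : V}

lemma compOf_subset : compOf G A c ⊆ A := fun _ ⟨hx, _, _⟩ => hx

lemma mem_compOf_self (hc : c ∈ A) : c ∈ compOf G A c := ⟨hc, hc, .refl _⟩

lemma compOf_eq_of_mem (hx : x ∈ compOf G A c) : compOf G A x = compOf G A c := by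
  obtain ⟨hx, hc, hxc⟩ := hx
  ext z
  exact ⟨fun ⟨hz, _, hzx⟩ => ⟨hz, hc, hzx.trans hxc⟩,
    fun ⟨hz, _, hzc⟩ => ⟨hz, hx, hzc.trans hxc.symm⟩⟩

lemma mem_compOf_of_adj (hx : x ∈ A) (hy : y ∈ A) (hadj : G.Adj x y) : x ∈ compOf G A y :=
  ⟨hx, hy, Adj.reachable (G := G.induce A) hadj⟩

lemma preconnected_induce_compOf : (G.induce (compOf G A c)).Preconnected := by
  have hreach : ∀ x (hx : x ∈ compOf G A c),
      (G.induce (compOf G A c)).Reachable ⟨c, mem_compOf_self hx.2.1⟩ ⟨x, hx⟩ := by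
    rintro x hx
    obtain ⟨hxA, hcA, hxc⟩ := hx
    refine hxc.symm.imp_of_adj (p := fun z : A => ∃ hz : z.1 ∈ compOf G A c,
      (G.induce (compOf G A c)).Reachable ⟨c, mem_compOf_self hcA⟩ ⟨z, hz⟩) ?_
      ⟨mem_compOf_self hcA, .refl _⟩ |>.elim fun _ h => h
    rintro z z' hzz' ⟨hz, hcz⟩
    have hz' : z'.1 ∈ compOf G A c :=
      compOf_eq_of_mem hz ▸ mem_compOf_of_adj z'.2 z.2 hzz'.symm
    exact ⟨hz', hcz.trans (Adj.reachable (G := G.induce (compOf G A c)) hzz')⟩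
  rintro ⟨x, hx⟩ ⟨y, hy⟩
  exact (hreach x hx).symm.trans (hreach y hy)

end CompOf

section AncDepth
variable {V : Type*} {anc : V → V → Prop} {S : Set V}

lemma ancDepth_le {k : ℕ} (h : ∀ b ∈ S, {a | anc a b}.ncard ≤ k) : ancDepth anc S ≤ k :=
  csSup_le' <| by rintro _ ⟨b, hb, rfl⟩; exact h b hb

lemma le_ancDepth [Finite V] {b : V} (hb : b ∈ S) : {a | anc a b}.ncard ≤ ancDepth anc S :=
  le_csSup (Set.toFinite _).bddAbove ⟨b, hb, rfl⟩

lemma ancDepth_comap_equiv (σ : V ≃ V) :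
    ancDepth (fun a b => anc (σ a) (σ b)) (σ ⁻¹' S) = ancDepth anc S := by
  have hcard : ∀ b, {a | anc (σ a) (σ b)}.ncard = {a | anc a (σ b)}.ncard := fun b =>
    Set.ncard_preimage_of_injective_subset_range (s := {a | anc a (σ b)}) σ.injective (by simp)
  simp only [ancDepth, hcard]
  rw [← Function.comp_def (fun b => {a | anc a b}.ncard) σ, Set.image_comp,
    Equiv.image_preimage]

end AncDepth

/-- A `TDDecomp` of `G[S]`, as a predicate on the ancestor relation. -/
structure IsDecomp {V : Type*} (G : SimpleGraph V) (S : Set V) (anc : V → V → Prop) : Prop where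
  mem : ∀ a b, anc a b → a ∈ S ∧ b ∈ S
  refl : ∀ v ∈ S, anc v v
  trans : ∀ a b c, anc a b → anc b c → anc a c
  antisymm : ∀ a b, anc a b → anc b a → a = b
  chain : ∀ a b v, anc a v → anc b v → anc a b ∨ anc b a
  covers : ∀ u v, u ∈ S → v ∈ S → G.Adj u v → anc u v ∨ anc v u

noncomputable def td {V : Type*} (G : SimpleGraph V) (S : Set V) : ℕ :=
  sInf {d | ∃ anc, IsDecomp G S anc ∧ ancDepth anc S = d}

section IsDecomp
variable {V : Type*} {G : SimpleGraph V} {S T : Set V} {anc : V → V → Prop}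

lemma isDecomp_le [LinearOrder V] (S : Set V) :
    IsDecomp G S (fun a b => a ∈ S ∧ b ∈ S ∧ a ≤ b) where
  mem _ _ h := ⟨h.1, h.2.1⟩
  refl _ hv := ⟨hv, hv, le_rfl⟩
  trans _ _ _ hab hbc := ⟨hab.1, hbc.2.1, hab.2.2.trans hbc.2.2⟩
  antisymm _ _ hab hba := le_antisymm hab.2.2 hba.2.2
  chain a b _ ha hb := (le_total a b).imp (fun h => ⟨ha.1, hb.1, h⟩) (fun h => ⟨hb.1, ha.1, h⟩)
  covers u v hu hv _ := (le_total u v).imp (fun h => ⟨hu, hv, h⟩) (fun h => ⟨hv, hu, h⟩)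

lemma exists_isDecomp_ancDepth_eq_td [LinearOrder V] (G : SimpleGraph V) (S : Set V) :
    ∃ anc, IsDecomp G S anc ∧ ancDepth anc S = td G S :=
  Nat.sInf_mem (s := {d | ∃ anc, IsDecomp G S anc ∧ ancDepth anc S = d})
    ⟨_, _, isDecomp_le S, rfl⟩

lemma td_le_ancDepth (hD : IsDecomp G S anc) : td G S ≤ ancDepth anc S :=
  Nat.sInf_le ⟨anc, hD, rfl⟩

lemma IsDecomp.one_le_ancDepth [Finite V] (hD : IsDecomp G S anc) (hS : S.Nonempty) :
    1 ≤ ancDepth anc S := by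
  obtain ⟨b, hb⟩ := hS
  refine le_trans ?_ (le_ancDepth hb)
  exact (Set.ncard_pos (s := {a | anc a b})).mpr ⟨b, hD.refl b hb⟩

lemma one_le_td [Finite V] [LinearOrder V] (hS : S.Nonempty) : 1 ≤ td G S := by
  obtain ⟨anc, hD, hd⟩ := exists_isDecomp_ancDepth_eq_td G S
  exact hd ▸ hD.one_le_ancDepth hS

lemma IsDecomp.restrict (hD : IsDecomp G S anc) (hT : T ⊆ S) :
    IsDecomp G T (fun a b => anc a b ∧ a ∈ T ∧ b ∈ T) where
  mem _ _ h := h.2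
  refl v hv := ⟨hD.refl v (hT hv), hv, hv⟩
  trans _ _ _ hab hbc := ⟨hD.trans _ _ _ hab.1 hbc.1, hab.2.1, hbc.2.2⟩
  antisymm _ _ hab hba := hD.antisymm _ _ hab.1 hba.1
  chain a b v ha hb := (hD.chain a b v ha.1 hb.1).imp (fun h => ⟨h, ha.2.1, hb.2.1⟩)
    (fun h => ⟨h, hb.2.1, ha.2.1⟩)
  covers u v hu hv huv := (hD.covers u v (hT hu) (hT hv) huv).imp (fun h => ⟨h, hu, hv⟩)
    (fun h => ⟨h, hv, hu⟩)

lemma ancDepth_restrict_add_one_le [Finite V] {rt : V} (hTS : T ⊆ S) (hT : T.Nonempty)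
    (hrt : rt ∉ T) (hroot : ∀ b ∈ T, anc rt b) :
    ancDepth (fun a b => anc a b ∧ a ∈ T ∧ b ∈ T) T + 1 ≤ ancDepth anc S := by
  have key : ∀ b ∈ T, {a | anc a b ∧ a ∈ T ∧ b ∈ T}.ncard + 1 ≤ ancDepth anc S := by
    intro b hb
    calc {a | anc a b ∧ a ∈ T ∧ b ∈ T}.ncard + 1
        ≤ ({a | anc a b} \ {rt}).ncard + 1 := by
          gcongr
          · exact Set.toFinite _
          · exact fun a ha => ⟨ha.1, fun h => hrt (h ▸ ha.2.1)⟩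
      _ = {a | anc a b}.ncard := Set.ncard_sdiff_singleton_add_one (hroot b hb)
      _ ≤ ancDepth anc S := le_ancDepth (hTS hb)
  obtain ⟨b, hb⟩ := hT
  have := key b hb
  have : ancDepth (fun a b => anc a b ∧ a ∈ T ∧ b ∈ T) T ≤ ancDepth anc S - 1 :=
    ancDepth_le fun b hb => by have := key b hb; omega
  omega

lemma IsDecomp.comap_equiv {G' : SimpleGraph V} (hD : IsDecomp G S anc) (σ : V ≃ V)
    (hcov : ∀ x y, σ x ∈ S → σ y ∈ S → G'.Adj x y → anc (σ x) (σ y) ∨ anc (σ y) (σ x)) :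
    IsDecomp G' (σ ⁻¹' S) (fun a b => anc (σ a) (σ b)) where
  mem _ _ h := hD.mem _ _ h
  refl _ hv := hD.refl _ hv
  trans _ _ _ := hD.trans _ _ _
  antisymm _ _ hab hba := σ.injective (hD.antisymm _ _ hab hba)
  chain _ _ _ := hD.chain _ _ _
  covers := hcov

lemma IsDecomp.exists_root [Finite V] (hD : IsDecomp G S anc) (hS : S.Nonempty)
    (hconn : (G.induce S).Preconnected) : ∃ rt ∈ S, ∀ b ∈ S, anc rt b := by
  obtain ⟨rt, hrt, hmin⟩ :=
    Set.exists_min_image S (fun b => {a | anc a b}.ncard) (Set.toFinite S) hS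
  have htop : ∀ a, anc a rt → a = rt := by
    intro a ha
    by_contra hne
    have hlt : {x | anc x a} ⊂ {x | anc x rt} :=
      ⟨fun x hx => hD.trans _ _ _ hx ha,
        fun h => hne (hD.antisymm _ _ ha (h (hD.refl rt hrt)))⟩
    exact (Set.ncard_lt_ncard hlt).not_ge (hmin a (hD.mem _ _ ha).1)
  have hclosed : ∀ x y : S, (G.induce S).Adj x y → anc rt x → anc rt y := by
    intro x y hxy hx
    rcases hD.covers x y x.2 y.2 hxy with h | h
    · exact hD.trans _ _ _ hx h
    · rcases hD.chain rt y x hx h with h' | h'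
      · exact h'
      · exact htop y h' ▸ hD.refl rt hrt
  exact ⟨rt, hrt, fun b hb =>
    (hconn ⟨rt, hrt⟩ ⟨b, hb⟩).imp_of_adj hclosed (hD.refl rt hrt)⟩

end IsDecomp

section ElimTree
variable {V : Type*} {G : SimpleGraph V} {S : Set V} {r : V} {sub : V → V → V → Prop}
  {anc : V → V → Prop}

lemma node_anc_iff
    (hmem : ∀ c ∈ S \ {r}, ∀ a b, sub c a b →
      a ∈ compOf G (S \ {r}) c ∧ b ∈ compOf G (S \ {r}) c)
    (hcong : ∀ c ∈ S \ {r}, ∀ c' ∈ S \ {r},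
      compOf G (S \ {r}) c = compOf G (S \ {r}) c' → sub c = sub c')
    (hanc : ∀ a b, anc a b ↔ (a = r ∧ b ∈ S) ∨ ∃ c ∈ S \ {r}, sub c a b) (a b : V) :
    anc a b ↔ (a = r ∧ b ∈ S) ∨ (b ∈ S \ {r} ∧ sub b a b) := by
  rw [hanc]
  refine or_congr_right ⟨fun ⟨c, hc, h⟩ => ?_, fun ⟨hb, h⟩ => ⟨b, hb, h⟩⟩
  have hb := (hmem c hc a b h).2
  exact ⟨compOf_subset hb, hcong b (compOf_subset hb) c hc (compOf_eq_of_mem hb) ▸ h⟩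

lemma IsDecomp.node (hr : r ∈ S)
    (hsub : ∀ c ∈ S \ {r}, IsDecomp G (compOf G (S \ {r}) c) (sub c))
    (hcong : ∀ c ∈ S \ {r}, ∀ c' ∈ S \ {r},
      compOf G (S \ {r}) c = compOf G (S \ {r}) c' → sub c = sub c')
    (hanc : ∀ a b, anc a b ↔ (a = r ∧ b ∈ S) ∨ ∃ c ∈ S \ {r}, sub c a b) :
    IsDecomp G S anc := by
  set A := S \ {r}
  have hmem : ∀ c ∈ A, ∀ a b, sub c a b → a ∈ compOf G A c ∧ b ∈ compOf G A c :=
    fun c hc => (hsub c hc).mem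
  have hsame : ∀ c ∈ A, ∀ x ∈ compOf G A c, x ∈ A ∧ sub x = sub c := fun c hc x hx =>
    ⟨compOf_subset hx, hcong x (compOf_subset hx) c hc (compOf_eq_of_mem hx)⟩
  obtain rfl : anc = fun a b => (a = r ∧ b ∈ S) ∨ (b ∈ A ∧ sub b a b) :=
    funext₂ fun a b => propext (node_anc_iff hmem hcong hanc a b)
  constructor
  · grind [compOf_subset]
  · grind [IsDecomp.refl, mem_compOf_self]
  · have := fun c hc => (hsub c hc).trans
    grind
  · have := fun c hc => (hsub c hc).antisymm
    grind
  · have := fun c hc => (hsub c hc).chain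
    grind
  · grind [IsDecomp.covers, mem_compOf_of_adj, mem_compOf_self]

lemma IsElimTree.isDecomp (h : IsElimTree G S r anc) : IsDecomp G S anc := by
  induction h with
  | single v =>
    constructor <;> grind [G.loopless]
  | node _ _ hr _ _ _ _ hcong _ hanc ih =>
    exact .node hr ih (fun c hc c' hc' h => (hcong c hc c' hc' h).2) hanc

lemma ancDepth_node_le [Finite V] {k : ℕ}
    (hmem : ∀ c ∈ S \ {r}, ∀ a b, sub c a b →
      a ∈ compOf G (S \ {r}) c ∧ b ∈ compOf G (S \ {r}) c)
    (hcong : ∀ c ∈ S \ {r}, ∀ c' ∈ S \ {r},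
      compOf G (S \ {r}) c = compOf G (S \ {r}) c' → sub c = sub c')
    (hanc : ∀ a b, anc a b ↔ (a = r ∧ b ∈ S) ∨ ∃ c ∈ S \ {r}, sub c a b)
    (hk : 1 ≤ k) (hsubk : ∀ b ∈ S \ {r}, {a | sub b a b}.ncard + 1 ≤ k) :
    ancDepth anc S ≤ k := by
  refine ancDepth_le fun b hb => ?_
  have hsub : {a | anc a b} ⊆ insert r {a | b ∈ S \ {r} ∧ sub b a b} := fun a ha => by
    rcases (node_anc_iff hmem hcong hanc a b).mp ha with ⟨rfl, _⟩ | h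
    · exact Set.mem_insert _ _
    · exact Set.mem_insert_of_mem _ h
  by_cases hbr : b ∈ S \ {r}
  · calc {a | anc a b}.ncard ≤ (insert r {a | b ∈ S \ {r} ∧ sub b a b}).ncard :=
          Set.ncard_le_ncard hsub
      _ ≤ {a | sub b a b}.ncard + 1 := by
          simpa [hbr] using Set.ncard_insert_le r {a | sub b a b}
      _ ≤ k := hsubk b hbr
  · calc {a | anc a b}.ncard ≤ ({r} : Set V).ncard := by
          simpa [hbr] using Set.ncard_le_ncard hsub
      _ ≤ k := by simpa using hk

end ElimTree

def IsOptimalRoot {V : Type*} (G : SimpleGraph V) (S : Set V) (r : V) : Prop :=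
  r ∈ S ∧ ∃ anc, IsDecomp G S anc ∧ ancDepth anc S = td G S ∧ ∀ b ∈ S, anc r b

section OptimalRoot
variable {V : Type*} {G : SimpleGraph V} {S : Set V} {u w x y : V}

lemma exists_isOptimalRoot [Finite V] [LinearOrder V] (hS : S.Nonempty)
    (hconn : (G.induce S).Preconnected) : ∃ r, IsOptimalRoot G S r := by
  obtain ⟨anc, hD, hd⟩ := exists_isDecomp_ancDepth_eq_td G S
  obtain ⟨r, hr, hroot⟩ := hD.exists_root hS hconn
  exact ⟨r, hr, anc, hD, hd, hroot⟩

lemma IsOptimalRoot.td_compOf_add_one_le [Finite V] {r c : V} (h : IsOptimalRoot G S r)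
    (hc : c ∈ S \ {r}) : td G (compOf G (S \ {r}) c) + 1 ≤ td G S := by
  obtain ⟨-, anc, hD, hd, hroot⟩ := h
  have hTS : compOf G (S \ {r}) c ⊆ S := fun _ hx => (compOf_subset hx).1
  have hrT : r ∉ compOf G (S \ {r}) c := fun h => (compOf_subset h).2 rfl
  calc td G (compOf G (S \ {r}) c) + 1
      ≤ ancDepth (fun a b => anc a b ∧ a ∈ compOf G (S \ {r}) c ∧ b ∈ compOf G (S \ {r}) c)
          (compOf G (S \ {r}) c) + 1 := by
        gcongr
        exact td_le_ancDepth (hD.restrict hTS)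
    _ ≤ ancDepth anc S := ancDepth_restrict_add_one_le hTS ⟨c, mem_compOf_self hc⟩ hrT
        fun b hb => hroot b (hTS hb)
    _ = td G S := hd

lemma adj_swap_of_neighborSet_sdiff_subset
    (hdom : G.neighborSet u \ {w} ⊆ G.neighborSet w \ {u}) (hxy : G.Adj x y) :
    Equiv.swap u w x = u ∨ Equiv.swap u w y = u ∨
      G.Adj (Equiv.swap u w x) (Equiv.swap u w y) := by
  have key : ∀ z, G.Adj u z → z ≠ w → G.Adj w z := fun z hz hzw => (hdom ⟨hz, hzw⟩).1
  rw [Equiv.swap_apply_def, Equiv.swap_apply_def]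
  have := hxy.ne
  split_ifs <;> grind [G.adj_symm]

lemma IsOptimalRoot.of_neighborSet_sdiff_subset (hu : IsOptimalRoot G S u) (hw : w ∈ S)
    (hdom : G.neighborSet u \ {w} ⊆ G.neighborSet w \ {u}) : IsOptimalRoot G S w := by
  obtain ⟨huS, anc, hD, hd, hroot⟩ := hu
  set σ := Equiv.swap u w
  have hσS : σ ⁻¹' S = S := Set.ext fun x => by
    rw [Set.mem_preimage, Equiv.swap_apply_def]
    split_ifs <;> simp_all
  have hD' : IsDecomp G S (fun a b => anc (σ a) (σ b)) :=
    hσS ▸ hD.comap_equiv σ fun x y hx hy hxy => by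
      rcases adj_swap_of_neighborSet_sdiff_subset hdom hxy with h | h | h
      · exact .inl (h ▸ hroot _ hy)
      · exact .inr (h ▸ hroot _ hx)
      · exact hD.covers _ _ hx hy h
  refine ⟨hw, _, hD', ?_, fun b hb => ?_⟩
  · rw [← hd, ← ancDepth_comap_equiv (anc := anc) σ, hσS]
  · simpa [σ, Equiv.swap_apply_right] using hroot (σ b) (by rwa [← Set.mem_preimage, hσS])

end OptimalRoot

section Dominates
variable {V : Type*} [LinearOrder V] {G : SimpleGraph V} {v w : V}

lemma Dominates.neighborSet_sdiff_subset (h : Dominates G v w) :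
    G.neighborSet w \ {v} ⊆ G.neighborSet v \ {w} :=
  h.2.elim (·.subset) (·.1.symm.subset)

lemma Dominates.toLex_lt [Finite V] (h : Dominates G v w) :
    toLex ((G.neighborSet w).ncard, w) < toLex ((G.neighborSet v).ncard, v) := by
  have hdeg : ∀ a b, (G.neighborSet a).ncard = (G.neighborSet a \ {b}).ncard +
      if G.Adj a b then 1 else 0 := fun a b => by
    split_ifs with hab
    · exact (Set.ncard_sdiff_singleton_add_one hab).symm
    · rw [Set.sdiff_singleton_eq_self (mt (G.mem_neighborSet a b).mp hab), add_zero]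
  rw [Prod.Lex.toLex_lt_toLex, hdeg v w, hdeg w v, G.adj_comm w v]
  rcases h with ⟨-, hlt | ⟨heq, hwv⟩⟩
  · exact .inl (by have := Set.ncard_lt_ncard hlt; omega)
  · exact .inr ⟨by rw [heq], hwv⟩

lemma exists_isOptimalRoot_forall_not_dominates [Finite V] {S : Set V} (hS : S.Nonempty)
    (hconn : (G.induce S).Preconnected) :
    ∃ r, IsOptimalRoot G S r ∧ ∀ x ∈ S, ¬ Dominates G x r := by
  obtain ⟨r, hr, hmax⟩ := Set.exists_max_image {r | IsOptimalRoot G S r}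
    (fun v => toLex ((G.neighborSet v).ncard, v)) (Set.toFinite _)
    (exists_isOptimalRoot hS hconn)
  exact ⟨r, hr, fun x hx hxr =>
    (hmax x (hr.of_neighborSet_sdiff_subset hx hxr.neighborSet_sdiff_subset)).not_gt hxr.toLex_lt⟩

end Dominates

section Main
variable {V : Type*} {G : SimpleGraph V}

/-- The congruence condition of `IsElimTree.node` asks for witnesses depending only on the
component. -/
lemma exists_compOf_choice {X : Type*} [Nonempty X] {A : Set V} {P : Set V → X → Prop}
    (h : ∀ c ∈ A, ∃ x, P (compOf G A c) x) :
    ∃ f : V → X, (∀ c ∈ A, P (compOf G A c) (f c)) ∧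
      ∀ c c', compOf G A c = compOf G A c' → f c = f c' :=
  ⟨fun c => Classical.epsilon (P (compOf G A c)), fun c hc => Classical.epsilon_spec (h c hc),
    fun c c' hcc' => by simp only [hcc']⟩

lemma ancDepth_single (v : V) : ancDepth (fun a b => a = v ∧ b = v) {v} = 1 := by
  simp [ancDepth]

lemma td_singleton [Finite V] [LinearOrder V] (v : V) : td G {v} = 1 := by
  have := ancDepth_single v ▸ td_le_ancDepth (IsElimTree.single (G := G) v).isDecomp
  have := one_le_td (G := G) (Set.singleton_nonempty v)
  omega

lemma exists_elimTree_node [Finite V] [LinearOrder V] {S : Set V} {r : V}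
    (hr : IsOptimalRoot G S r) (hSr : S ≠ {r}) (hnd : ∀ x ∈ S, ¬ Dominates G x r)
    (hrec : ∀ c ∈ S \ {r}, ∃ p : V × (V → V → Prop),
      IsElimTree G (compOf G (S \ {r}) c) p.1 p.2 ∧
      ancDepth p.2 (compOf G (S \ {r}) c) = td G (compOf G (S \ {r}) c) ∧
      ∀ v w, p.2 w v → ¬ Dominates G v w) :
    ∃ anc, IsElimTree G S r anc ∧ ancDepth anc S = td G S ∧
      ∀ v w, anc w v → ¬ Dominates G v w := by
  set A := S \ {r}
  have : Nonempty (V × (V → V → Prop)) := ⟨(r, fun _ _ => True)⟩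
  obtain ⟨f, hf, hfcong⟩ := exists_compOf_choice (P := fun C (p : V × (V → V → Prop)) =>
    IsElimTree G C p.1 p.2 ∧ ancDepth p.2 C = td G C ∧ ∀ v w, p.2 w v → ¬ Dominates G v w) hrec
  have hcong : ∀ c ∈ A, ∀ c' ∈ A, compOf G A c = compOf G A c' →
      (f c).1 = (f c').1 ∧ (f c).2 = (f c').2 := fun c _ c' _ h => by rw [hfcong c c' h]; simp
  set anc : V → V → Prop := fun a b => (a = r ∧ b ∈ S) ∨ ∃ c ∈ A, (f c).2 a b
  have hanc : ∀ a b, anc a b ↔ (a = r ∧ b ∈ S) ∨ ∃ c ∈ A, (f c).2 a b := fun _ _ => Iff.rfl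
  have htree := IsElimTree.node S r hr.1 hSr _ _ (fun c hc => (hf c hc).1) hcong _ hanc
  refine ⟨_, htree, le_antisymm ?_ (td_le_ancDepth htree.isDecomp), ?_⟩
  · refine ancDepth_node_le (fun c hc => (hf c hc).1.isDecomp.mem) (fun c hc c' hc' h =>
      (hcong c hc c' hc' h).2) hanc (one_le_td ⟨r, hr.1⟩) fun b hb => ?_
    calc {a | (f b).2 a b}.ncard + 1 ≤ td G (compOf G A b) + 1 := by
          gcongr
          exact (hf b hb).2.1 ▸ le_ancDepth (mem_compOf_self hb)
      _ ≤ td G S := hr.td_compOf_add_one_le hb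
  · rintro v w (⟨rfl, hv⟩ | ⟨c, hc, h⟩)
    · exact hnd v hv
    · exact (hf c hc).2.2 v w h

theorem exists_elimTree_ancDepth_eq_td_forall_not_dominates [Finite V] [LinearOrder V]
    {S : Set V} (hS : S.Nonempty) (hconn : (G.induce S).Preconnected) :
    ∃ r anc, IsElimTree G S r anc ∧ ancDepth anc S = td G S ∧
      ∀ v w, anc w v → ¬ Dominates G v w := by
  induction hn : S.ncard using Nat.strong_induction_on generalizing S with
  | _ n ih =>
  obtain ⟨r, hr, hnd⟩ := exists_isOptimalRoot_forall_not_dominates hS hconn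
  by_cases hSr : S = {r}
  · subst hSr
    refine ⟨r, _, .single r, ?_, fun v w h hvw => hvw.1 (h.1.trans h.2.symm).symm⟩
    rw [td_singleton, ancDepth_single]
  refine ⟨r, exists_elimTree_node hr hSr hnd fun c hc => ?_⟩
  have hlt : (compOf G (S \ {r}) c).ncard < n := hn ▸
    (Set.ncard_le_ncard compOf_subset).trans_lt (Set.ncard_sdiff_singleton_lt_of_mem hr.1)
  obtain ⟨r', anc', h⟩ := ih _ hlt ⟨c, mem_compOf_self hc⟩ preconnected_induce_compOf rfl
  exact ⟨(r', anc'), h⟩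

lemma td_univ : td G Set.univ = treedepth G := by
  unfold td treedepth
  congr 1
  ext d
  constructor
  · rintro ⟨anc, hD, rfl⟩
    exact ⟨⟨anc, fun v => hD.refl v trivial, hD.trans, hD.antisymm, hD.chain,
      fun u v h => hD.covers u v trivial trivial h⟩, rfl⟩
  · rintro ⟨F, rfl⟩
    exact ⟨F.anc, ⟨fun _ _ _ => ⟨trivial, trivial⟩, fun v _ => F.refl v, F.trans,
      F.antisymm, F.chain, fun u v _ _ h => F.covers u v h⟩, rfl⟩

end Main

/-- For a connected graph there is a minimum-depth elimination tree in which
no vertex dominates any of its ancestors. -/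
theorem elimTree_no_dominated_ancestor {V : Type*} [Fintype V] [LinearOrder V]
    {G : SimpleGraph V} (hG : G.Connected) :
    ∃ (r : V) (anc : V → V → Prop),
      IsElimTree G Set.univ r anc ∧ ancDepth anc Set.univ = treedepth G ∧
      ∀ v w, anc w v → ¬ Dominates G v w := by
  have : Nonempty V := hG.nonempty
  obtain ⟨r, anc, htree, hdepth, hdom⟩ := exists_elimTree_ancDepth_eq_td_forall_not_dominates
    Set.univ_nonempty (G.induceUnivIso.preconnected_iff.mpr hG.preconnected)
  exact ⟨r, anc, htree, hdepth.trans td_univ, hdom⟩
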